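/- Let (V,d) be a finite metric space, k ≥ 1, and let v_1, …, v_{k+1} be the points chosen by the greedy farthest-point procedure (each new point maximizes its distance to the previously chosen set). Then the pairwise distances among v_1, …, v_{k+1} are all at least δ := min_{c ∈ {v_1,…,v_k}} d(v_{k+1}, c), and consequently any set T of k centers has some center within whose Voronoi cell lie two of the v_i, forcing max_{v} min_{c∈T} d(v,c) ≥ δ/2. -/

import Mathlib

/-!
The distance from a point to the first `i` greedy points only shrinks as `i` grows, and the
greedy choice makes `v i` the farthest point from that prefix; hence every `v j` with `j ≤ k` is
at least as far from its predecessors as `v k` is from all of `v 0, …, v (k - 1)`, which gives the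
separation. Given `k` centers, two of the `k + 1` separated points share a nearest center `c`, and
the triangle inequality through `c` puts one of them at distance at least `δ / 2` from the centers.
-/

open Finset

section Greedy

variable {V : Type*} [PseudoMetricSpace V] {k : ℕ} {v : ℕ → V}

theorem greedy_inf'_dist_le_dist (hk : k ≠ 0)
    (hgreedy : ∀ i, ∀ hi : 0 < i, i ≤ k → ∀ u : V,
      (range i).inf' (nonempty_range_iff.mpr hi.ne') (fun j => dist u (v j))
        ≤ (range i).inf' (nonempty_range_iff.mpr hi.ne') (fun j => dist (v i) (v j)))
    {i j : ℕ} (hij : i < j) (hjk : j ≤ k) :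
    (range k).inf' (nonempty_range_iff.mpr hk) (fun j' => dist (v k) (v j'))
      ≤ dist (v i) (v j) := by
  rw [dist_comm]
  rcases hjk.eq_or_lt with rfl | hjk
  · exact inf'_le _ (mem_range.mpr hij)
  have hj : (range j).Nonempty := nonempty_range_iff.mpr (by omega)
  calc (range k).inf' _ (fun j' => dist (v k) (v j'))
      ≤ (range j).inf' hj (fun j' => dist (v k) (v j')) :=
        inf'_mono _ (range_subset_range.mpr hjk.le) hj
    _ ≤ (range j).inf' hj (fun j' => dist (v j) (v j')) :=
        hgreedy j (by omega) hjk.le (v k)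
    _ ≤ dist (v j) (v i) := inf'_le _ (mem_range.mpr hij)

end Greedy

section NearestCenter

variable {V : Type*} [PseudoMetricSpace V] (T : Finset V) (hT : T.Nonempty)

noncomputable def nearestCenter (u : V) : V :=
  (exists_mem_eq_inf' hT (dist u)).choose

theorem nearestCenter_mem (u : V) : nearestCenter T hT u ∈ T :=
  (exists_mem_eq_inf' hT (dist u)).choose_spec.1

theorem dist_nearestCenter (u : V) : dist u (nearestCenter T hT u) = T.inf' hT (dist u) :=
  (exists_mem_eq_inf' hT (dist u)).choose_spec.2.symm

variable {T hT}

theorem dist_le_inf'_add_inf'_of_nearestCenter_eq {u w : V}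
    (h : nearestCenter T hT u = nearestCenter T hT w) :
    dist u w ≤ T.inf' hT (dist u) + T.inf' hT (dist w) := by
  rw [← dist_nearestCenter, ← dist_nearestCenter, h, dist_comm w]
  exact dist_triangle _ _ _

theorem exists_ne_nearestCenter_eq {ι : Type*} {s : Finset ι} (p : ι → V)
    (hcard : T.card < s.card) :
    ∃ i ∈ s, ∃ j ∈ s, i ≠ j ∧ nearestCenter T hT (p i) = nearestCenter T hT (p j) :=
  exists_ne_map_eq_of_card_lt_of_maps_to hcard fun i _ => nearestCenter_mem T hT (p i)

theorem half_le_sup'_inf'_dist_of_card_lt [Fintype V] [Nonempty V] {ι : Type*} {s : Finset ι}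
    {p : ι → V} {δ : ℝ} (hsep : ∀ i ∈ s, ∀ j ∈ s, i ≠ j → δ ≤ dist (p i) (p j))
    (hcard : T.card < s.card) :
    δ / 2 ≤ univ.sup' univ_nonempty (fun u => T.inf' hT (dist u)) := by
  obtain ⟨i, hi, j, hj, hij, hcenter⟩ := exists_ne_nearestCenter_eq (hT := hT) p hcard
  have hpi := le_sup' (fun u => T.inf' hT (dist u)) (mem_univ (p i))
  have hpj := le_sup' (fun u => T.inf' hT (dist u)) (mem_univ (p j))
  linarith [hsep i hi j hj hij, dist_le_inf'_add_inf'_of_nearestCenter_eq hcenter]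

end NearestCenter

/-- Let `v 0, …, v k` be the `k+1` points chosen by the greedy farthest-point procedure
and `δ = min_{j<k} dist (v k) (v j)`. Then all pairwise distances among `v 0, …, v k`
are at least `δ`, and any set `T` of `k` centers has objective at least `δ/2`. -/
theorem greedy_points_separated {V : Type*} [Fintype V] [Nonempty V] [MetricSpace V]
    (k : ℕ) (hk : 1 ≤ k) (v : ℕ → V)
    (hgreedy : ∀ i, ∀ hi : 0 < i, i ≤ k → ∀ u : V,
      (Finset.range i).inf' (Finset.nonempty_range_iff.mpr (by omega)) (fun j => dist u (v j))
        ≤ (Finset.range i).inf' (Finset.nonempty_range_iff.mpr (by omega))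
            (fun j => dist (v i) (v j))) :
    (∀ i j, i < j → j ≤ k →
      (Finset.range k).inf' (Finset.nonempty_range_iff.mpr (by omega))
          (fun j' => dist (v k) (v j'))
        ≤ dist (v i) (v j))
    ∧ ∀ T : Finset V, T.card = k → ∀ hT : T.Nonempty,
      (Finset.range k).inf' (Finset.nonempty_range_iff.mpr (by omega))
          (fun j' => dist (v k) (v j')) / 2
        ≤ Finset.univ.sup' Finset.univ_nonempty (fun u => T.inf' hT (fun c => dist u c)) := by
  have hsep := fun i j (hij : i < j) (hjk : j ≤ k) => greedy_inf'_dist_le_dist (by omega) hgreedy hij hjk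
  refine ⟨hsep, fun T hcard hT => half_le_sup'_inf'_dist_of_card_lt (s := range (k + 1)) (p := v) ?_ ?_⟩
  · intro i hi j hj hij
    simp only [mem_range] at hi hj
    rcases hij.lt_or_gt with hij | hji
    · exact hsep i j hij (by omega)
    · exact (hsep j i hji (by omega)).trans_eq (dist_comm _ _)
  · simp [hcard]
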